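/- The second incompleteness theorem fails for the Rosser provability predicate: if T is a recursively axiomatized consistent extension of PA, then T proves Con^R(T), where Con^R(T) := ¬Pr^R_T(⌜0≠0⌝). -/

import Mathlib

open FirstOrder Language BoundedFormula

/-- The function symbols of the language of arithmetic: `0, S, +, ×`. -/
inductive ArithFunc : ℕ → Type
  | zero : ArithFunc 0
  | succ : ArithFunc 1
  | add : ArithFunc 2
  | mul : ArithFunc 2

/-- The first-order language of arithmetic `{0, S, +, ×}`. -/
def Larith : Language := ⟨ArithFunc, fun _ => Empty⟩

abbrev zero' {α : Type} : Larith.Term α := Term.func ArithFunc.zero ![]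
abbrev succ' {α : Type} (t : Larith.Term α) : Larith.Term α := Term.func ArithFunc.succ ![t]
abbrev add' {α : Type} (t s : Larith.Term α) : Larith.Term α := Term.func ArithFunc.add ![t, s]
abbrev mul' {α : Type} (t s : Larith.Term α) : Larith.Term α := Term.func ArithFunc.mul ![t, s]

/-- The numeral `S^n(0)`. -/
def numeral {α : Type} : ℕ → Larith.Term α
  | 0 => zero'
  | n + 1 => succ' (numeral n)

/-- Substitution of a numeral for the unique free variable of a formula. -/
def substNum (φ : Larith.Formula (Fin 1)) (n : ℕ) : Larith.Sentence :=
  φ.subst fun _ => numeral n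

/-- Substitution of numerals for the two free variables of a formula. -/
def substNum2 (φ : Larith.Formula (Fin 2)) (m n : ℕ) : Larith.Sentence :=
  φ.subst ![numeral m, numeral n]

/-- Existential quantification of a formula with one free variable, as a sentence. -/
def toBF1 (φ : Larith.Formula (Fin 1)) : Larith.BoundedFormula Empty 1 :=
  BoundedFormula.relabel (fun _ => Sum.inr (0 : Fin 1)) φ

def exQ (φ : Larith.Formula (Fin 1)) : Larith.Sentence :=
  BoundedFormula.ex (toBF1 φ)

/-- Universal quantification of a formula with one free variable, as a sentence. -/
def allQ (φ : Larith.Formula (Fin 1)) : Larith.Sentence :=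
  BoundedFormula.all (toBF1 φ)

/-- `T` proves the sentence `φ` (via the completeness theorem, provability is
semantic consequence). -/
def Proves (T : Larith.Theory) (φ : Larith.Sentence) : Prop :=
  T ⊨ᵇ φ

/-- `T` is consistent: it does not prove a contradiction. -/
def Consistent (T : Larith.Theory) : Prop :=
  ¬ Proves T BoundedFormula.falsum

/-- `T` is ω-consistent: there is no formula `φ(x)` such that `T ⊢ ∃x φ(x)` and
`T ⊢ ¬φ(n̄)` for every natural number `n`. -/
def OmegaConsistent (T : Larith.Theory) : Prop :=
  ¬ ∃ φ : Larith.Formula (Fin 1),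
      Proves T (exQ φ) ∧ ∀ n : ℕ, Proves T (substNum φ n).not

-- extension chunk to test
instance : ∀ n, DecidableEq (ArithFunc n) := fun _ a b => by
  cases a <;> cases b <;> first | exact isTrue rfl | exact isFalse (by intro h; cases h)

instance : Countable (Σ l, Larith.Functions l) := by
  have : Function.Injective (fun f : Σ l, Larith.Functions l =>
    match f with
    | ⟨_, ArithFunc.zero⟩ => (0 : ℕ)
    | ⟨_, ArithFunc.succ⟩ => 1
    | ⟨_, ArithFunc.add⟩ => 2
    | ⟨_, ArithFunc.mul⟩ => 3) := by
    rintro ⟨i, f⟩ ⟨j, g⟩ h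
    cases f <;> cases g <;> simp_all
  exact this.countable

instance : ∀ n, IsEmpty (Larith.Relations n) := fun _ => ⟨fun r => r.elim⟩

instance : Countable (Σ l, Larith.Relations l) :=
  ⟨⟨fun x => x.2.elim, fun x => x.2.elim⟩⟩

instance : Countable Larith.Sentence := by
  have : Function.Injective (fun φ : Larith.Sentence =>
      (⟨0, φ⟩ : Σ n, Larith.BoundedFormula Empty n)) := by
    intro φ ψ h
    simpa using h
  have h2 := (BoundedFormula.listEncode_sigma_injective
    (L := Larith) (α := Empty)).comp this
  exact h2.countable

noncomputable instance : Encodable Larith.Sentence := Encodable.ofCountable _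

/-- A fixed Gödel numbering of sentences. -/
noncomputable def gnum (φ : Larith.Sentence) : ℕ := Encodable.encode φ

/-- The sentence `0 ≠ 0`. -/
def falseEq : Larith.Sentence := ∼(zero' =' zero')

def q1 : Larith.Sentence := ∀' ∀' ((succ' &0 =' succ' &1) ⟹ (&0 =' &1))
def q2 : Larith.Sentence := ∀' ∼(succ' &0 =' zero')
def q3 : Larith.Sentence := ∀' (∼(&0 =' zero') ⟹ ∃' (&0 =' succ' &1))
def q4 : Larith.Sentence := ∀' (add' &0 zero' =' &0)
def q5 : Larith.Sentence := ∀' ∀' (add' &0 (succ' &1) =' succ' (add' &0 &1))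
def q6 : Larith.Sentence := ∀' (mul' &0 zero' =' zero')
def q7 : Larith.Sentence := ∀' ∀' (mul' &0 (succ' &1) =' add' (mul' &0 &1) &0)

/-- Robinson arithmetic `Q`. -/
def RobinsonQ : Larith.Theory := {q1, q2, q3, q4, q5, q6, q7}

/-- The induction axiom for a formula `φ` with free variable `&m` (the last
de Bruijn variable) and parameters `&0, …, &(m-1)`, universally closed. -/
def indAxiom (m : ℕ) (φ : Larith.BoundedFormula Empty (m + 1)) : Larith.Sentence :=
  BoundedFormula.alls
    ((∀' ((&(Fin.last m) =' zero') ⟹ φ)) ⟹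
      ((∀' (φ ⟹ ∀' ((&(Fin.last (m + 1)) =' succ' &((Fin.last m).castSucc)) ⟹
          φ.liftAt 1 m))) ⟹
        ∀' φ))

/-- Peano arithmetic `PA`: the axioms of `Q` (except `Q₃`) together with the
induction scheme. -/
def PA : Larith.Theory :=
  {q1, q2, q4, q5, q6, q7} ∪ ⋃ m : ℕ, Set.range (indAxiom m)

/-- `T` has a recursive set of axioms. -/
def RecursivelyAxiomatized (T : Larith.Theory) : Prop :=
  ComputablePred fun n : ℕ => ∃ φ ∈ T, gnum φ = n

/-- The set of Gödel numbers of theorems of `T` is recursive. -/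
def DecidableTheory (T : Larith.Theory) : Prop :=
  ComputablePred fun n : ℕ => ∃ φ : Larith.Sentence, gnum φ = n ∧ Proves T φ

/-- The standard model of arithmetic. -/
instance : Larith.Structure ℕ where
  funMap {n} f args :=
    match f with
    | ArithFunc.zero => 0
    | ArithFunc.succ => args 0 + 1
    | ArithFunc.add => args 0 + args 1
    | ArithFunc.mul => args 0 * args 1
  RelMap {n} r _ := r.elim

/-- Truth in the standard model of arithmetic. -/
def TrueInN (φ : Larith.Sentence) : Prop := Sentence.Realize ℕ φ


/-- The Rosser provability predicate
`Pr^R(x) := ∃y (Prf(x,y) ∧ ∀z ≤ y ∀x' (Neg(x,x') → ¬Prf(x',z)))`,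
where `z ≤ y` is expressed as `∃w (z + w = y)` and `Neg` represents the
function computing the code of the negation of a formula. -/
def rosserPr (Prf NegF : Larith.Formula (Fin 2)) : Larith.Formula (Fin 1) :=
  BoundedFormula.ex
    ((BoundedFormula.relabel (![Sum.inl 0, Sum.inr 0] : Fin 2 → Fin 1 ⊕ Fin 1) Prf :
        Larith.BoundedFormula (Fin 1) 1) ⊓
      ∀' ((∃' (add' &1 &2 =' &0)) ⟹
        ∀' ((BoundedFormula.relabel (![Sum.inl 0, Sum.inr 2] : Fin 2 → Fin 1 ⊕ Fin 3) NegF :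
              Larith.BoundedFormula (Fin 1) 3) ⟹
          ∼(BoundedFormula.relabel (![Sum.inr 2, Sum.inr 1] : Fin 2 → Fin 1 ⊕ Fin 3) Prf :
              Larith.BoundedFormula (Fin 1) 3))))

/-!
`T` proves `¬(0 ≠ 0)`, so some standard `n` codes a proof of it; and `Prf`, `Neg` are decided
numeralwise by `T`, so every model of `T` agrees with `ℕ` on them at numerals. In a model,
induction shows that any element `y` is either `≥ n̄` or one of the numerals `0̄, …, (n-1)‾`.
A Rosser witness `y` for `0 ≠ 0` cannot be `≥ n̄`, because the proof `n̄` of the negation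
comes no later, and cannot be a numeral, because a consistent `T` has no actual proof
of `0 ≠ 0`.
-/

section Interpretation

variable (M : Type) [Larith.Structure M]

def zeroM : M := Structure.funMap (L := Larith) ArithFunc.zero ![]

variable {M}

def succM (a : M) : M := Structure.funMap (L := Larith) ArithFunc.succ ![a]

def addM (a b : M) : M := Structure.funMap (L := Larith) ArithFunc.add ![a, b]

variable (M) in
def numM : ℕ → M
  | 0 => zeroM M
  | n + 1 => succM (numM n)

variable {α : Type} (v : α → M)

@[simp] lemma realize_zero' : (zero' : Larith.Term α).realize v = zeroM M := by
  simp only [zeroM, Term.realize]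
  congr 1
  exact funext fun i => i.elim0

@[simp] lemma realize_succ' (t : Larith.Term α) : (succ' t).realize v = succM (t.realize v) := by
  simp only [succM, Term.realize]
  congr 1
  funext i
  fin_cases i
  rfl

@[simp] lemma realize_add' (t s : Larith.Term α) :
    (add' t s).realize v = addM (t.realize v) (s.realize v) := by
  simp only [addM, Term.realize]
  congr 1
  funext i
  fin_cases i <;> rfl

@[simp] lemma realize_numeral (n : ℕ) : (numeral n : Larith.Term α).realize v = numM M n := by
  induction n with
  | zero => exact realize_zero' v
  | succ n ih => exact (realize_succ' v _).trans (congrArg succM ih)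

end Interpretation

section PeanoModel

variable {M : Type} [Larith.Structure M] [M ⊨ PA]

lemma addM_zeroM (a : M) : addM a (zeroM M) = a := by
  have h : M ⊨ q4 := Theory.realize_sentence_of_mem PA (by simp [PA])
  simpa [q4, Sentence.Realize, Formula.Realize, Fin.snoc] using h a

lemma addM_succM (a b : M) : addM a (succM b) = succM (addM a b) := by
  have h : M ⊨ q5 := Theory.realize_sentence_of_mem PA (by simp [PA])
  simpa [q5, Sentence.Realize, Formula.Realize, Fin.snoc] using h a b

lemma forall_of_indAxiom (φ : Larith.BoundedFormula Empty 1) (P : M → Prop)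
    (hφ : ∀ xs : Fin 1 → M, φ.Realize default xs ↔ P (xs 0)) (zero : P (zeroM M))
    (succ : ∀ x, P x → P (succM x)) : ∀ x, P x := by
  have h : M ⊨ indAxiom 0 φ := Theory.realize_sentence_of_mem PA
    (Set.mem_union_right _ (Set.mem_iUnion.2 ⟨0, Set.mem_range_self φ⟩))
  have snoc_zero (xs : Fin 0 → M) (a : M) : Fin.snoc (α := fun _ => M) xs a 0 = a := rfl
  have snoc_one (xs : Fin 1 → M) (a : M) : Fin.snoc (α := fun _ => M) xs a 1 = a := rfl
  simp only [Sentence.Realize, Formula.Realize, indAxiom, alls, Nat.reduceAdd, Fin.reduceLast,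
    Fin.last_zero, Fin.castSucc_zero, realize_imp, realize_all, realize_bdEqual, Term.realize_var,
    Sum.elim_inr, snoc_zero, realize_zero', hφ, forall_eq, snoc_one, realize_succ',
    Fin.snoc_apply_zero, zero_le, realize_liftAt_one, Fin.val_eq_zero, lt_self_iff_false,
    ↓reduceIte, Fin.succ_zero_eq_one, Function.comp_apply] at h
  exact h zero succ

lemma exists_numM_add_eq_or_eq_numM (n : ℕ) (y : M) :
    (∃ w, addM (numM M n) w = y) ∨ ∃ k : Fin n, y = numM M k := by
  refine forall_of_indAxiom
    ((∃' (add' (numeral n) &1 =' &0)) ⊔ BoundedFormula.iSup fun k : Fin n => &0 =' numeral k)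
    (fun y => (∃ w, addM (numM M n) w = y) ∨ ∃ k : Fin n, y = numM M k)
    (fun xs => by simp [Fin.snoc]) ?_ ?_ y
  · cases n with
    | zero => exact Or.inl ⟨zeroM M, addM_zeroM _⟩
    | succ n => exact Or.inr ⟨0, rfl⟩
  · rintro x (⟨w, rfl⟩ | ⟨k, rfl⟩)
    · exact Or.inl ⟨succM w, addM_succM _ _⟩
    · by_cases hk : k + 1 < n
      · exact Or.inr ⟨⟨k + 1, hk⟩, rfl⟩
      · have hn : n = k + 1 := by omega
        exact Or.inl ⟨zeroM M, (addM_zeroM _).trans (congrArg (numM M) hn)⟩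

end PeanoModel

section Rosser

variable {M : Type} [Larith.Structure M]

lemma realize_substNum2 (P : Larith.Formula (Fin 2)) (m n : ℕ) :
    M ⊨ substNum2 P m n ↔ P.Realize ![numM M m, numM M n] := by
  have hv : (fun i => (![numeral m, numeral n] i : Larith.Term Empty).realize default) =
      ![numM M m, numM M n] := by
    funext i
    fin_cases i <;> simp
  simp only [substNum2, Sentence.Realize, Formula.Realize, BoundedFormula.realize_subst, hv]

lemma realize_formula_fin_two (P : Larith.Formula (Fin 2)) (v : Fin 2 → M) (xs : Fin 0 → M) :
    BoundedFormula.Realize P v xs ↔ P.Realize ![v 0, v 1] := by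
  rw [Formula.Realize, Subsingleton.elim xs default]
  congr!
  funext i
  fin_cases i <;> rfl

lemma realize_substNum_rosserPr (Prf NegF : Larith.Formula (Fin 2)) (c : ℕ) :
    M ⊨ substNum (rosserPr Prf NegF) c ↔ ∃ y, Prf.Realize ![numM M c, y] ∧
      ∀ z, (∃ w, addM z w = y) → ∀ x', NegF.Realize ![numM M c, x'] → ¬ Prf.Realize ![x', z] := by
  simp only [substNum, rosserPr, Sentence.Realize, Formula.Realize]
  simp [realize_formula_fin_two, Fin.snoc]

end Rosser

lemma realize_numM_iff_trueInN {T : Larith.Theory} {P : Larith.Formula (Fin 2)}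
    (hP : ∀ k n : ℕ,
      (TrueInN (substNum2 P k n) → Proves T (substNum2 P k n)) ∧
      (¬ TrueInN (substNum2 P k n) → Proves T ∼(substNum2 P k n)))
    (M : T.ModelType) (k n : ℕ) :
    P.Realize ![numM M k, numM M n] ↔ TrueInN (substNum2 P k n) := by
  rw [← realize_substNum2]
  by_cases h : TrueInN (substNum2 P k n)
  · exact iff_of_true (((hP k n).1 h).realize_sentence M) h
  · exact iff_of_false (by simpa using ((hP k n).2 h).realize_sentence M) h

theorem rosser_consistency_provable_general (T : Larith.Theory)
    (hPA : PA ⊆ T) (hCons : Consistent T)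
    (Prf NegF : Larith.Formula (Fin 2))
    (hRep : ∀ φ : Larith.Sentence,
      Proves T φ ↔ ∃ n : ℕ, TrueInN (substNum2 Prf (gnum φ) n))
    (hRepNum : ∀ k n : ℕ,
      (TrueInN (substNum2 Prf k n) → Proves T (substNum2 Prf k n)) ∧
      (¬ TrueInN (substNum2 Prf k n) → Proves T ∼(substNum2 Prf k n)))
    (hNeg : ∀ (φ : Larith.Sentence) (n : ℕ),
      TrueInN (substNum2 NegF (gnum φ) n) ↔ n = gnum (∼φ))
    (hNegNum : ∀ k n : ℕ,
      (TrueInN (substNum2 NegF k n) → Proves T (substNum2 NegF k n)) ∧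
      (¬ TrueInN (substNum2 NegF k n) → Proves T ∼(substNum2 NegF k n)))
    :
    Proves T ∼(substNum (rosserPr Prf NegF) (gnum falseEq)) := by
  have proves_not_falseEq : Proves T ∼falseEq := fun _ _ _ => by simp [falseEq]
  have not_proves_falseEq : ¬ Proves T falseEq := fun h =>
    hCons fun M v xs => by simpa [falseEq] using h M v xs
  obtain ⟨n, hn⟩ := (hRep _).1 proves_not_falseEq
  refine Theory.models_sentence_iff.2 fun M => ?_
  have : (M : Type) ⊨ PA := Theory.Model.mono inferInstance hPA
  rw [Sentence.realize_not, realize_substNum_rosserPr]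
  rintro ⟨y, hPrf, hmin⟩
  rcases exists_numM_add_eq_or_eq_numM n y with ⟨w, hw⟩ | ⟨k, rfl⟩
  · exact hmin _ ⟨w, hw⟩ _ ((realize_numM_iff_trueInN hNegNum M _ _).2 ((hNeg _ _).2 rfl))
      ((realize_numM_iff_trueInN hRepNum M _ _).2 hn)
  · exact not_proves_falseEq
      ((hRep _).2 ⟨k, (realize_numM_iff_trueInN hRepNum M _ _).1 hPrf⟩)

/-- G2 fails for the Rosser provability predicate: a recursively
axiomatized consistent extension `T` of `PA` proves
`Con^R(T) := ¬Pr^R_T(⌜0≠0⌝)`. -/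
theorem rosser_consistency_provable (T : Larith.Theory)
    (hPA : PA ⊆ T) (hRec : RecursivelyAxiomatized T) (hCons : Consistent T)
    (Prf NegF : Larith.Formula (Fin 2))
    (hRep : ∀ φ : Larith.Sentence,
      Proves T φ ↔ ∃ n : ℕ, TrueInN (substNum2 Prf (gnum φ) n))
    (hRepNum : ∀ k n : ℕ,
      (TrueInN (substNum2 Prf k n) → Proves T (substNum2 Prf k n)) ∧
      (¬ TrueInN (substNum2 Prf k n) → Proves T ∼(substNum2 Prf k n)))
    (hUniq : ∀ k k' n : ℕ,
      TrueInN (substNum2 Prf k n) → TrueInN (substNum2 Prf k' n) → k = k')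
    (hNeg : ∀ (φ : Larith.Sentence) (n : ℕ),
      TrueInN (substNum2 NegF (gnum φ) n) ↔ n = gnum (∼φ))
    (hNegNum : ∀ k n : ℕ,
      (TrueInN (substNum2 NegF k n) → Proves T (substNum2 NegF k n)) ∧
      (¬ TrueInN (substNum2 NegF k n) → Proves T ∼(substNum2 NegF k n)))
    :
    Proves T ∼(substNum (rosserPr Prf NegF) (gnum falseEq)) :=
  rosser_consistency_provable_general T hPA hCons Prf NegF hRep hRepNum hNeg hNegNum
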